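/- Let f be a differentiable probability density function on (0,∞) with finite mean, positive on (0,∞), belonging to the Pearson family: f′(x)/f(x) = −(x + d)/(A₀ + A₁x + A₂x²) for all x > 0, where d, A₀, A₁, A₂ are real constants with A₂ ≠ 1/2 and A₀ + A₁x + A₂x² ≠ 0 on (0,∞). Assume moreover that (A₀ + A₁x + A₂x²) f(x) → 0 as x → ∞. Then for every t > 0 with F̄(t) > 0, E(X | X > t) = (A₁ − d)/(1 − 2A₂) + ((A₀ + A₁t + A₂t²)/(1 − 2A₂)) r(t). -/

import Mathlib

open MeasureTheory Set Filter

/-!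
Write `Q x = A₀ + A₁ x + A₂ x²`. The Pearson equation `Q f' = -(x + d) f` makes the derivative of
`Q f` equal to `(A₁ - d) f + (2A₂ - 1) x f`. Integrating over `(t, ∞)`, where `Q f` vanishes at
infinity, gives `(A₁ - d) F̄(t) + (2A₂ - 1) ∫_t^∞ x f = -Q(t) f(t)`; dividing by `(1 - 2A₂) F̄(t)`
yields the conditional mean.
-/

theorem hasDerivAt_quadratic_mul_of_pearson {f : ℝ → ℝ} {f'x d A₀ A₁ A₂ x : ℝ}
    (hf : HasDerivAt f f'x x) (hfx : f x ≠ 0) (hQ : A₀ + A₁ * x + A₂ * x ^ 2 ≠ 0)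
    (hP : f'x / f x = -(x + d) / (A₀ + A₁ * x + A₂ * x ^ 2)) :
    HasDerivAt (fun y => (A₀ + A₁ * y + A₂ * y ^ 2) * f y)
      ((A₁ - d) * f x + (2 * A₂ - 1) * (x * f x)) x := by
  have hQderiv : HasDerivAt (fun y : ℝ => A₀ + A₁ * y + A₂ * y ^ 2) (A₁ + 2 * A₂ * x) x :=
    ((((hasDerivAt_id x).const_mul A₁).const_add A₀).add
      ((hasDerivAt_pow 2 x).const_mul A₂)).congr_deriv (by norm_num; ring)
  have hcross : (A₀ + A₁ * x + A₂ * x ^ 2) * f'x = -(x + d) * f x := by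
    rw [div_eq_div_iff hfx hQ] at hP
    linarith
  exact (hQderiv.mul hf).congr_deriv (by linear_combination hcross)

theorem integral_Ioi_pearson {f f' : ℝ → ℝ} {d A₀ A₁ A₂ t : ℝ}
    (hderiv : ∀ x, t ≤ x → HasDerivAt f (f' x) x) (hf_ne : ∀ x, t ≤ x → f x ≠ 0)
    (hquad : ∀ x, t ≤ x → A₀ + A₁ * x + A₂ * x ^ 2 ≠ 0)
    (hPearson : ∀ x, t ≤ x → f' x / f x = -(x + d) / (A₀ + A₁ * x + A₂ * x ^ 2))
    (hf : IntegrableOn f (Ioi t)) (hmean : IntegrableOn (fun x => x * f x) (Ioi t))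
    (hlim : Tendsto (fun x => (A₀ + A₁ * x + A₂ * x ^ 2) * f x) atTop (nhds 0)) :
    (A₁ - d) * (∫ x in Ioi t, f x) + (2 * A₂ - 1) * (∫ x in Ioi t, x * f x)
      = -((A₀ + A₁ * t + A₂ * t ^ 2) * f t) := by
  have hderivQf : ∀ x, t ≤ x → HasDerivAt (fun y => (A₀ + A₁ * y + A₂ * y ^ 2) * f y)
      ((A₁ - d) * f x + (2 * A₂ - 1) * (x * f x)) x := fun x hx =>
    hasDerivAt_quadratic_mul_of_pearson (hderiv x hx) (hf_ne x hx) (hquad x hx) (hPearson x hx)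
  have hFTC := integral_Ioi_of_hasDerivAt_of_tendsto
    (hderivQf t le_rfl).continuousAt.continuousWithinAt
    (fun x hx => hderivQf x (le_of_lt hx)) ((hf.const_mul _).add (hmean.const_mul _)) hlim
  rw [integral_add (hf.const_mul _) (hmean.const_mul _), integral_const_mul,
    integral_const_mul] at hFTC
  linear_combination hFTC

theorem conditional_mean_of_pearson_family
    (f : ℝ → ℝ) (hf_pos : ∀ x, 0 < x → 0 < f x)
    (hf_int : IntegrableOn f (Set.Ioi 0))
    (hmean : IntegrableOn (fun x => x * f x) (Set.Ioi 0))
    (d A₀ A₁ A₂ : ℝ) (hA₂ : A₂ ≠ 1 / 2)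
    (hquad : ∀ x, 0 < x → A₀ + A₁ * x + A₂ * x ^ 2 ≠ 0)
    (f' : ℝ → ℝ) (hderiv : ∀ x, 0 < x → HasDerivAt f (f' x) x)
    (hPearson : ∀ x, 0 < x →
      f' x / f x = -(x + d) / (A₀ + A₁ * x + A₂ * x ^ 2))
    (hlim : Filter.Tendsto (fun x => (A₀ + A₁ * x + A₂ * x ^ 2) * f x)
      Filter.atTop (nhds 0))
    (Fbar : ℝ → ℝ) (hFbar : ∀ t, Fbar t = ∫ x in Set.Ioi t, f x)
    (r : ℝ → ℝ) (hr : ∀ t, r t = f t / Fbar t)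
    (t : ℝ) (ht : 0 < t) (hpos : 0 < Fbar t) :
    (∫ x in Set.Ioi t, x * f x) / Fbar t
      = (A₁ - d) / (1 - 2 * A₂) + ((A₀ + A₁ * t + A₂ * t ^ 2) / (1 - 2 * A₂)) * r t := by
  have hpos_of_le : ∀ x, t ≤ x → 0 < x := fun x hx => ht.trans_le hx
  have hsub : Ioi t ⊆ Ioi (0 : ℝ) := Ioi_subset_Ioi ht.le
  have hidentity := integral_Ioi_pearson (fun x hx => hderiv x (hpos_of_le x hx))
    (fun x hx => (hf_pos x (hpos_of_le x hx)).ne') (fun x hx => hquad x (hpos_of_le x hx))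
    (fun x hx => hPearson x (hpos_of_le x hx)) (hf_int.mono_set hsub) (hmean.mono_set hsub) hlim
  rw [← hFbar t] at hidentity
  have h2A : 1 - 2 * A₂ ≠ 0 := fun h => hA₂ (by linarith)
  rw [hr]
  field_simp [hpos.ne']
  linear_combination -hidentity
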